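/- arXiv:1108.6313 — 3 statements merged into one kernel-verified Lean document; each statement's English description precedes it below -/
import Mathlib

section
/- Consider the two-party XOR sharing of a bit b ∈ {0,1} using a uniformly random bit r, with shares v₁(b,r) = b ⊕ r and v₂(b,r) = r. For b ∈ {0,1} define the 4×4 density matrix ρ_b = (1/2) Σ_{r∈{0,1}} |ψ_{b,r}⟩⟨ψ_{b,r}| where |ψ_{b,r}⟩ = (1/√2)(|1⟩⊗|b⊕r⟩ + |2⟩⊗|r⟩) ∈ ℂ²⊗ℂ². Then ρ₀ ≠ ρ₁. -/
/-- The state `|ψ_{b,r}⟩ = (1/√2)(|1⟩|b⊕r⟩ + |2⟩|r⟩)` of the two-party XOR sharing, as a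
vector in `ℂ² ⊗ ℂ² ≅ ℂ^(Bool × Bool)` (first component `false` ↔ party 1, `true` ↔ party 2). -/
noncomputable def xorShareState (b r : Bool) : Bool × Bool → ℂ := fun p =>
  (Real.sqrt 2)⁻¹ *
    ((if p = (false, xor b r) then 1 else 0) + (if p = (true, r) then 1 else 0))

/-- The adversary's mixed state `ρ_b = (1/2) Σ_r |ψ_{b,r}⟩⟨ψ_{b,r}|`. -/
noncomputable def xorShareDensity (b : Bool) : Matrix (Bool × Bool) (Bool × Bool) ℂ :=
  (2 : ℂ)⁻¹ • ∑ r : Bool,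
    Matrix.of fun p q => xorShareState b r p * (starRingEnd ℂ) (xorShareState b r q)

/-- The adversary's states for the two secrets are different: `ρ₀ ≠ ρ₁`. -/
theorem xorShareDensity_ne : xorShareDensity false ≠ xorShareDensity true := by
  intro h
  have h' := congrFun (congrFun h (false, false)) (true, false)
  have hs : (Real.sqrt 2 : ℂ) ≠ 0 := by
    norm_cast
    positivity
  simp [xorShareDensity, xorShareState, Fin.sum_univ_succ, Matrix.smul_apply,
    Matrix.add_apply, mul_comm, hs] at h'
end

section
/- With ρ₀, ρ₁ as in the two-party XOR sharing (ρ_b = (1/2) Σ_{r∈{0,1}} |ψ_{b,r}⟩⟨ψ_{b,r}|, |ψ_{b,r}⟩ = (1/√2)(|1⟩|b⊕r⟩ + |2⟩|r⟩)), the trace norm of ρ₀ − ρ₁ is at least 1; hence the optimal probability 1/2 + (1/4)·‖ρ₀−ρ₁‖_Tr of distinguishing ρ₀ from ρ₁ is at least 3/4. -/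
open scoped ComplexOrder MatrixOrder in
/-- The trace norm of a complex matrix: `Tr √(Mᴴ M)`, i.e. the sum of singular values. -/
noncomputable def traceNorm {m n : Type*} [Fintype m] [Fintype n] [DecidableEq n]
    (M : Matrix m n ℂ) : ℝ :=
  ((CFC.sqrt (M.conjTranspose * M)).trace).re

/-!
Entrywise, `ρ₀ − ρ₁ = ½ · X ⊗ |−⟩⟨−|`, where `X` swaps the two parties and `|−⟩ = (|0⟩ − |1⟩)/√2`.
Hence `(ρ₀ − ρ₁)ᴴ (ρ₀ − ρ₁) = ¼ · Q` with `Q = 1 ⊗ |−⟩⟨−|` an orthogonal projection of rank 2, so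
its square root is `½ · Q` and the trace norm is `½ · tr Q = 1`.
-/

open Matrix

open scoped ComplexOrder MatrixOrder in
theorem traceNorm_eq_of_conjTranspose_mul_self_eq_smul {n : Type*} [Fintype n] [DecidableEq n]
    {M Q : Matrix n n ℂ} {c : ℝ} (hc : 0 ≤ c) (hQ : Q.IsHermitian) (hQQ : Q * Q = Q)
    (hM : Mᴴ * M = c ^ 2 • Q) : traceNorm M = c * Q.trace.re := by
  have hQ_nonneg : 0 ≤ Q := by
    simpa [hQ.eq, hQQ] using (posSemidef_conjTranspose_mul_self Q).nonneg
  have hsqrt : CFC.sqrt (Mᴴ * M) = c • Q := by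
    refine CFC.sqrt_unique ?_ (smul_nonneg hc hQ_nonneg)
    rw [hM, smul_mul_smul, hQQ, sq]
  rw [traceNorm, hsqrt, trace_smul, Complex.real_smul, Complex.re_ofReal_mul]

/-- `1 ⊗ |−⟩⟨−|`, the first coordinate being the party and the second the bit. -/
noncomputable def bitMinusProj : Matrix (Bool × Bool) (Bool × Bool) ℂ :=
  of fun p q => if p.1 = q.1 then (if p.2 = q.2 then 2⁻¹ else -2⁻¹) else 0

theorem bitMinusProj_isHermitian : bitMinusProj.IsHermitian := by
  ext ⟨a, b⟩ ⟨c, d⟩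
  cases a <;> cases b <;> cases c <;> cases d <;> simp [bitMinusProj]

theorem bitMinusProj_mul_self : bitMinusProj * bitMinusProj = bitMinusProj := by
  ext ⟨a, b⟩ ⟨c, d⟩
  cases a <;> cases b <;> cases c <;> cases d <;>
    simp [bitMinusProj, mul_apply, Fintype.sum_prod_type] <;> norm_num

theorem trace_bitMinusProj : bitMinusProj.trace = 2 := by
  simp [bitMinusProj, trace]; norm_num

theorem xorShareDensity_false_sub_true : xorShareDensity false - xorShareDensity true =
    of fun p q => if p.1 = q.1 then 0 else if p.2 = q.2 then (4 : ℂ)⁻¹ else -(4 : ℂ)⁻¹ := by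
  have h2 : ((√2 : ℝ) : ℂ)⁻¹ * ((√2 : ℝ) : ℂ)⁻¹ = 2⁻¹ := by
    rw [← mul_inv, ← Complex.ofReal_mul, Real.mul_self_sqrt zero_le_two, Complex.ofReal_ofNat]
  ext ⟨a, b⟩ ⟨c, d⟩
  cases a <;> cases b <;> cases c <;> cases d <;>
    simp [xorShareDensity, xorShareState, mul_add, add_mul] <;> norm_num [h2]

theorem conjTranspose_mul_self_xorShareDensity_sub :
    (xorShareDensity false - xorShareDensity true)ᴴ * (xorShareDensity false - xorShareDensity true)
      = (2⁻¹ : ℝ) ^ 2 • bitMinusProj := by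
  rw [xorShareDensity_false_sub_true]
  ext ⟨a, b⟩ ⟨c, d⟩
  cases a <;> cases b <;> cases c <;> cases d <;>
    simp [bitMinusProj, mul_apply, Fintype.sum_prod_type, Complex.conj_ofNat] <;> norm_num

theorem traceNorm_xorShareDensity_sub :
    traceNorm (xorShareDensity false - xorShareDensity true) = 1 := by
  rw [traceNorm_eq_of_conjTranspose_mul_self_eq_smul (by norm_num) bitMinusProj_isHermitian
    bitMinusProj_mul_self conjTranspose_mul_self_xorShareDensity_sub, trace_bitMinusProj]
  norm_num

/-- `‖ρ₀ − ρ₁‖_Tr ≥ 1`, hence the optimal distinguishing probability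
`1/2 + (1/4)‖ρ₀ − ρ₁‖_Tr` is at least `3/4`. -/
theorem xorShare_distinguish :
    1 ≤ traceNorm (xorShareDensity false - xorShareDensity true) ∧
    (3 / 4 : ℝ) ≤
      1 / 2 + (1 / 4) * traceNorm (xorShareDensity false - xorShareDensity true) := by
  rw [traceNorm_xorShareDensity_sub]
  norm_num
end

section
/- Let (|ψ_i⟩)_{i<n} and (|φ_k⟩)_{k<n} be families of vectors in ℂ^d and (p_i), (q_k) probability weights with Σ_i p_i |ψ_i⟩⟨ψ_i| = Σ_k q_k |φ_k⟩⟨φ_k| (equality of density matrices), where all |ψ_i⟩, |φ_k⟩ are unit vectors. Then there exists an n×n unitary matrix U such that √(q_k) |φ_k⟩ = Σ_i √(p_i) U_{ik} |ψ_i⟩ for all k. -/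
/-!
Write `ρ = A Aᴴ = B Bᴴ`, where the columns of `A` are `√pᵢ ψᵢ` and those of `B` are `√q_k φ_k`.
Then `‖Aᴴ x‖² = ⟪x, ρ x⟫ = ‖Bᴴ x‖²` for every `x`, so `Aᴴ x ↦ Bᴴ x` is a well-defined isometry
from the range of `Aᴴ` into `ℂⁿ`. Extending it to an isometry of `ℂⁿ` gives a unitary `V` with
`V Aᴴ = Bᴴ`, i.e. `B = A Vᴴ`, which read column by column is the claim with `U = Vᴴ`.
-/

open Matrix

section InnerProductSpace

variable {𝕜 E V : Type*} [RCLike 𝕜] [AddCommGroup E] [Module 𝕜 E]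
  [NormedAddCommGroup V] [InnerProductSpace 𝕜 V] [FiniteDimensional 𝕜 V]

theorem LinearMap.exists_linearIsometry_comp_eq_of_norm_eq (g h : E →ₗ[𝕜] V)
    (hgh : ∀ x, ‖g x‖ = ‖h x‖) : ∃ W : V →ₗᵢ[𝕜] V, ∀ x, W (g x) = h x := by
  obtain ⟨s, hs⟩ := g.rangeRestrict.exists_rightInverse_of_surjective g.range_rangeRestrict
  have hgs : ∀ y : range g, g (s y) = y := fun y => congrArg Subtype.val (LinearMap.congr_fun hs y)
  -- `s (g x) - x` lies in `ker g`, which equal norms force into `ker h`.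
  have hhs : ∀ x, h (s (g.rangeRestrict x)) = h x := by
    intro x
    have hker : ‖h (s (g.rangeRestrict x) - x)‖ = 0 := by
      rw [← hgh, map_sub, hgs]
      exact (congrArg norm (sub_self (g x))).trans norm_zero
    rwa [norm_eq_zero, map_sub, sub_eq_zero] at hker
  let L : range g →ₗᵢ[𝕜] V :=
    { toLinearMap := h ∘ₗ s
      norm_map' := fun y => by rw [LinearMap.comp_apply, ← hgh, hgs, Submodule.coe_norm] }
  exact ⟨L.extend, fun x => (L.extend_apply (g.rangeRestrict x)).trans (hhs x)⟩

end InnerProductSpace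

namespace Matrix

variable {𝕜 m n : Type*} [RCLike 𝕜] [Fintype m] [DecidableEq m] [Fintype n] [DecidableEq n]

theorem exists_mem_unitaryGroup_toEuclideanLin_eq
    (W : EuclideanSpace 𝕜 m →ₗᵢ[𝕜] EuclideanSpace 𝕜 m) :
    ∃ U ∈ unitaryGroup m 𝕜, toEuclideanLin U = W.toLinearMap := by
  let b := (EuclideanSpace.basisFun m 𝕜).toBasis
  refine ⟨LinearMap.toMatrix b b W,
    (W.toLinearIsometryEquiv rfl).toMatrix_mem_unitaryGroup _ _, ?_⟩
  rw [toEuclideanLin_eq_toLin_orthonormal, toLin_toMatrix]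
  rfl

theorem norm_toEuclideanLin_eq_of_conjTranspose_mul_self_eq {A B : Matrix m n 𝕜}
    (h : Aᴴ * A = Bᴴ * B) (x : EuclideanSpace 𝕜 n) :
    ‖toEuclideanLin A x‖ = ‖toEuclideanLin B x‖ := by
  have hnorm_sq : ∀ C : Matrix m n 𝕜,
      ‖toEuclideanLin C x‖ ^ 2 = RCLike.re (inner 𝕜 x (toEuclideanLin (Cᴴ * C) x)) := by
    intro C
    rw [toLpLin_mul_same, LinearMap.comp_apply, toEuclideanLin_conjTranspose_eq_adjoint,
      LinearMap.adjoint_inner_right, inner_self_eq_norm_sq]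
  rw [← sq_eq_sq₀ (norm_nonneg _) (norm_nonneg _), hnorm_sq, hnorm_sq, h]

theorem exists_mem_unitaryGroup_mul_eq_of_conjTranspose_mul_self_eq {A B : Matrix m n 𝕜}
    (h : Aᴴ * A = Bᴴ * B) : ∃ U ∈ unitaryGroup m 𝕜, U * A = B := by
  obtain ⟨W, hW⟩ := (toEuclideanLin A).exists_linearIsometry_comp_eq_of_norm_eq
    (toEuclideanLin B) (norm_toEuclideanLin_eq_of_conjTranspose_mul_self_eq h)
  obtain ⟨U, hU, hUW⟩ := exists_mem_unitaryGroup_toEuclideanLin_eq W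
  refine ⟨U, hU, toEuclideanLin.injective ?_⟩
  ext1 x
  rw [toLpLin_mul_same, LinearMap.comp_apply, hUW]
  exact hW x

theorem exists_mem_unitaryGroup_eq_mul_of_mul_conjTranspose_eq {A B : Matrix n m 𝕜}
    (h : A * Aᴴ = B * Bᴴ) : ∃ U ∈ unitaryGroup m 𝕜, B = A * U := by
  obtain ⟨V, hV, hVA⟩ := exists_mem_unitaryGroup_mul_eq_of_conjTranspose_mul_self_eq
    (A := Aᴴ) (B := Bᴴ) (by simpa only [conjTranspose_conjTranspose] using h)
  refine ⟨star V, Unitary.star_mem hV, ?_⟩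
  rw [star_eq_conjTranspose, ← conjTranspose_conjTranspose B, ← hVA, conjTranspose_mul,
    conjTranspose_conjTranspose]

end Matrix

section Ensemble

variable {𝕜 ι m : Type*} [RCLike 𝕜] [Fintype ι]

noncomputable def ensembleMatrix (w : ι → ℝ) (v : ι → m → 𝕜) : Matrix m ι 𝕜 :=
  of fun a i => (√(w i) : 𝕜) * v i a

theorem ensembleMatrix_mul_conjTranspose {w : ι → ℝ} (hw : ∀ i, 0 ≤ w i) (v : ι → m → 𝕜) :
    ensembleMatrix w v * (ensembleMatrix w v)ᴴ
      = ∑ i, (w i : 𝕜) • of fun a b => v i a * starRingEnd 𝕜 (v i b) := by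
  ext a b
  simp only [ensembleMatrix, mul_apply, conjTranspose_apply, of_apply, Matrix.sum_apply,
    Matrix.smul_apply, smul_eq_mul, star_mul', RCLike.star_def, RCLike.conj_ofReal]
  refine Finset.sum_congr rfl fun i _ => ?_
  have hsq : (w i : 𝕜) = (√(w i) : 𝕜) * (√(w i) : 𝕜) := by
    rw [← RCLike.ofReal_mul, Real.mul_self_sqrt (hw i)]
  rw [hsq]
  ring

end Ensemble

theorem unitary_freedom_of_ensembles_general {n d : ℕ}
    (ψ φ : Fin n → (Fin d → ℂ)) (p q : Fin n → ℝ)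
    (hp0 : ∀ i, 0 ≤ p i) (hq0 : ∀ k, 0 ≤ q k)
    (hρ : ∑ i, (p i : ℂ) •
            Matrix.of (fun a b => ψ i a * (starRingEnd ℂ) (ψ i b))
          = ∑ k, (q k : ℂ) •
              Matrix.of (fun a b => φ k a * (starRingEnd ℂ) (φ k b))) :
    ∃ U ∈ Matrix.unitaryGroup (Fin n) ℂ,
      ∀ k a, (Real.sqrt (q k) : ℂ) * φ k a
        = ∑ i, (Real.sqrt (p i) : ℂ) * U i k * ψ i a := by
  obtain ⟨U, hU, hqp⟩ := exists_mem_unitaryGroup_eq_mul_of_mul_conjTranspose_eq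
    (A := ensembleMatrix p ψ) (B := ensembleMatrix q φ) (by
      rw [ensembleMatrix_mul_conjTranspose hp0, ensembleMatrix_mul_conjTranspose hq0]
      exact hρ)
  refine ⟨U, hU, fun k a => ?_⟩
  have hentry := congrFun (congrFun hqp a) k
  simp only [ensembleMatrix, mul_apply, of_apply, RCLike.ofReal_eq_complex_ofReal] at hentry
  rw [hentry]
  exact Finset.sum_congr rfl fun i _ => by ring

/-- Unitary freedom of ensembles (Hughston–Jozsa–Wootters): if two ensembles of unit vectors
with probability weights give the same density matrix, then they are related by a unitary
matrix mixing the (square-root weighted) states. -/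
theorem unitary_freedom_of_ensembles {n d : ℕ}
    (ψ φ : Fin n → (Fin d → ℂ)) (p q : Fin n → ℝ)
    (hp0 : ∀ i, 0 ≤ p i) (hq0 : ∀ k, 0 ≤ q k)
    (hp1 : ∑ i, p i = 1) (hq1 : ∑ k, q k = 1)
    (hψ : ∀ i, ∑ a, ‖ψ i a‖ ^ 2 = 1)
    (hφ : ∀ k, ∑ a, ‖φ k a‖ ^ 2 = 1)
    (hρ : ∑ i, (p i : ℂ) •
            Matrix.of (fun a b => ψ i a * (starRingEnd ℂ) (ψ i b))
          = ∑ k, (q k : ℂ) •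
              Matrix.of (fun a b => φ k a * (starRingEnd ℂ) (φ k b))) :
    ∃ U ∈ Matrix.unitaryGroup (Fin n) ℂ,
      ∀ k a, (Real.sqrt (q k) : ℂ) * φ k a
        = ∑ i, (Real.sqrt (p i) : ℂ) * U i k * ψ i a :=
  unitary_freedom_of_ensembles_general ψ φ p q hp0 hq0 hρ
end
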